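/- arXiv:1108.2164 — 4 statements merged into one kernel-verified Lean document; each statement's English description precedes it below -/
import Mathlib

section
/- The function P(z) = (1/pi^2) * double integral over [0,pi]^2 of dk_1 dk_2 / (1 - z cos(k_1) cos(k_2)), defined for |z| < 1, satisfies the differential equation z(z^2 - 1) P''(z) + (3z^2 - 1) P'(z) + z P(z) = 0. -/
open scoped Real

/-- The lattice Green's function of the two-dimensional fcc lattice. -/
noncomputable def lgf2 (z : ℝ) : ℝ :=
  (1 / π ^ 2) * ∫ k₁ in (0:ℝ)..π, ∫ k₂ in (0:ℝ)..π,
    1 / (1 - z * Real.cos k₁ * Real.cos k₂)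

/-!
Expanding `1 / (1 - z cos k₁ cos k₂)` as a geometric series and integrating term by term gives
`P(z) = ∑ cₙ zⁿ` with `cₙ = (Wₙ / π)²`, where `Wₙ = ∫₀^π cosⁿ`. The Wallis recurrence
`Wₙ₊₂ = (n + 1) / (n + 2) Wₙ` turns into `(n + 2)² cₙ₊₂ = (n + 1)² cₙ`, and `c₁ = 0`.
Differentiating term by term, the left-hand side of the equation becomes the telescoping series
`∑ (Tₙ₊₂ - Tₙ)` with `Tₙ = n² cₙ zⁿ⁻¹`, whose sum is `-(T₀ + T₁) = -c₁ = 0`.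
-/

open Real Metric

theorem hasSum_intervalIntegral_of_norm_le_geometric {E : Type*} [NormedAddCommGroup E]
    [NormedSpace ℝ E] {F : ℕ → ℝ → E} {f : ℝ → E} {a b C q : ℝ} (hq₀ : 0 ≤ q) (hq₁ : q < 1)
    (hF : ∀ n, Continuous (F n)) (hF_le : ∀ n t, ‖F n t‖ ≤ C * q ^ n)
    (hf : ∀ t, HasSum (F · t) (f t)) :
    HasSum (fun n => ∫ t in a..b, F n t) (∫ t in a..b, f t) :=
  intervalIntegral.hasSum_integral_of_dominated_convergence (fun n _ => C * q ^ n)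
    (fun n => (hF n).aestronglyMeasurable) (fun n => .of_forall fun t _ => hF_le n t)
    (.of_forall fun _ _ => (summable_geometric_of_lt_one hq₀ hq₁).mul_left C)
    intervalIntegrable_const (.of_forall fun t _ => hf t)

noncomputable def cosPowIntegral (n : ℕ) : ℝ := ∫ x in (0:ℝ)..π, cos x ^ n

theorem cosPowIntegral_add_two (n : ℕ) :
    cosPowIntegral (n + 2) = (n + 1) / (n + 2) * cosPowIntegral n := by
  simp [cosPowIntegral, integral_cos_pow]

theorem cosPowIntegral_one : cosPowIntegral 1 = 0 := by
  simp [cosPowIntegral]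

theorem abs_cosPowIntegral_le (n : ℕ) : |cosPowIntegral n| ≤ π := by
  simpa [cosPowIntegral, abs_of_pos pi_pos] using
    intervalIntegral.norm_integral_le_of_norm_le_const (a := 0) (b := π) (C := 1)
      (f := fun x => cos x ^ n) fun x _ => by
        simpa [abs_pow] using pow_le_one₀ (abs_nonneg _) (abs_cos_le_one x)

theorem abs_mul_cos_le (w x : ℝ) : |w * cos x| ≤ |w| := by
  simpa [abs_mul] using mul_le_of_le_one_right (abs_nonneg w) (abs_cos_le_one x)

theorem hasSum_integral_inv_one_sub_mul_cos {w : ℝ} (hw : |w| < 1) :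
    HasSum (fun n => w ^ n * cosPowIntegral n) (∫ x in (0:ℝ)..π, 1 / (1 - w * cos x)) := by
  have hgeom (x : ℝ) : HasSum (fun n => (w * cos x) ^ n) (1 / (1 - w * cos x)) := by
    simpa [one_div] using hasSum_geometric_of_abs_lt_one ((abs_mul_cos_le w x).trans_lt hw)
  refine (hasSum_intervalIntegral_of_norm_le_geometric (abs_nonneg w) hw (C := 1)
    (fun n => by fun_prop) (fun n x => ?_) hgeom).congr_fun fun n => ?_
  · simpa [abs_pow] using pow_le_pow_left₀ (abs_nonneg _) (abs_mul_cos_le w x) n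
  · simp [mul_pow, cosPowIntegral]

noncomputable def lgf2Coeff (n : ℕ) : ℝ := (cosPowIntegral n / π) ^ 2

theorem abs_lgf2Coeff_le_one (n : ℕ) : |lgf2Coeff n| ≤ 1 := by
  rw [lgf2Coeff, abs_pow, abs_div, abs_of_pos pi_pos]
  exact pow_le_one₀ (by positivity) ((div_le_one pi_pos).mpr (abs_cosPowIntegral_le n))

theorem lgf2Coeff_one : lgf2Coeff 1 = 0 := by
  simp [lgf2Coeff, cosPowIntegral_one]

theorem lgf2Coeff_add_two (n : ℕ) :
    ((n : ℝ) + 2) ^ 2 * lgf2Coeff (n + 2) = ((n : ℝ) + 1) ^ 2 * lgf2Coeff n := by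
  rw [lgf2Coeff, lgf2Coeff, cosPowIntegral_add_two]
  field_simp

theorem hasSum_lgf2 {z : ℝ} (hz : |z| < 1) :
    HasSum (fun n => lgf2Coeff n * z ^ n) (lgf2 z) := by
  have h := hasSum_intervalIntegral_of_norm_le_geometric (a := 0) (b := π) (abs_nonneg z) hz
    (C := π) (F := fun n x => (z * cos x) ^ n * cosPowIntegral n) (fun n => by fun_prop)
    (fun n x => ?_) fun x => hasSum_integral_inv_one_sub_mul_cos ((abs_mul_cos_le z x).trans_lt hz)
  · refine (h.mul_left (1 / π ^ 2)).congr_fun fun n => ?_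
    simp only [mul_pow, intervalIntegral.integral_mul_const, intervalIntegral.integral_const_mul,
      lgf2Coeff, cosPowIntegral]
    field_simp
  · rw [Real.norm_eq_abs, abs_mul, abs_pow, mul_comm π]
    exact mul_le_mul (pow_le_pow_left₀ (abs_nonneg _) (abs_mul_cos_le z x) n)
      (abs_cosPowIntegral_le n) (abs_nonneg _) (by positivity)

theorem summable_descFactorial_mul_pow_sub (j : ℕ) {r : ℝ} (hr : |r| < 1) :
    Summable fun n : ℕ => (n.descFactorial j : ℝ) * r ^ (n - j) := by
  refine (summable_nat_add_iff j).mp ?_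
  simpa using summable_descFactorial_mul_geometric_of_norm_lt_one (R := ℝ) j
    (by rwa [Real.norm_eq_abs])

/-- `n.descFactorial j * z ^ (n - j)` is the `j`-th derivative of `z ^ n`; the factor
`n.descFactorial j` vanishes exactly when `n < j`, where `n - j` truncates. -/
noncomputable def termwiseIterDeriv (a : ℕ → ℝ) (j : ℕ) (z : ℝ) : ℝ :=
  ∑' n, a n * (n.descFactorial j * z ^ (n - j))

section BoundedCoeff

variable {a : ℕ → ℝ} {C : ℝ}

theorem abs_termwiseIterDeriv_term_le (ha : ∀ n, |a n| ≤ C) (j n : ℕ) {z r : ℝ}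
    (hzr : |z| ≤ r) :
    |a n * (n.descFactorial j * z ^ (n - j))| ≤ C * (n.descFactorial j * r ^ (n - j)) := by
  rw [abs_mul, abs_mul, abs_pow, Nat.abs_cast]
  gcongr
  · exact (abs_nonneg _).trans (ha 0)
  · exact ha n

theorem summable_termwiseIterDeriv (ha : ∀ n, |a n| ≤ C) (j : ℕ) {z : ℝ} (hz : |z| < 1) :
    Summable fun n => a n * (n.descFactorial j * z ^ (n - j)) :=
  .of_norm_bounded ((summable_descFactorial_mul_pow_sub j (r := |z|) (by rwa [abs_abs])).mul_left C)
    fun n => abs_termwiseIterDeriv_term_le ha j n le_rfl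

theorem hasDerivAt_termwiseIterDeriv (ha : ∀ n, |a n| ≤ C) (j : ℕ) {z : ℝ} (hz : |z| < 1) :
    HasDerivAt (termwiseIterDeriv a j) (termwiseIterDeriv a (j + 1) z) z := by
  obtain ⟨r, hzr, hr⟩ := exists_between hz
  replace hr : |r| < 1 := by rwa [abs_of_pos ((abs_nonneg z).trans_lt hzr)]
  replace hzr : z ∈ ball (0 : ℝ) r := by rwa [mem_ball_zero_iff, Real.norm_eq_abs]
  refine hasDerivAt_tsum_of_isPreconnected
    (g := fun n w => a n * (n.descFactorial j * w ^ (n - j)))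
    (g' := fun n w => a n * (n.descFactorial (j + 1) * w ^ (n - (j + 1))))
    ((summable_descFactorial_mul_pow_sub (j + 1) hr).mul_left C) isOpen_ball
    (convex_ball 0 r).isPreconnected (fun n w _ => ?_) (fun n w hw => ?_) hzr
    (summable_termwiseIterDeriv ha j hz) hzr
  · refine (((hasDerivAt_pow (n - j) w).const_mul (n.descFactorial j : ℝ)).const_mul
      (a n)).congr_deriv ?_
    rw [Nat.descFactorial_succ, Nat.cast_mul, Nat.sub_sub]
    ring
  · rw [mem_ball_zero_iff, Real.norm_eq_abs] at hw
    exact abs_termwiseIterDeriv_term_le ha (j + 1) n hw.le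

theorem eqOn_iteratedDeriv_termwiseIterDeriv (ha : ∀ n, |a n| ≤ C) {f : ℝ → ℝ}
    (hf : Set.EqOn f (termwiseIterDeriv a 0) (ball 0 1)) (j : ℕ) :
    Set.EqOn (iteratedDeriv j f) (termwiseIterDeriv a j) (ball 0 1) := by
  induction j with
  | zero => simpa using hf
  | succ j ih =>
    intro z hz
    have hz' : |z| < 1 := by rwa [mem_ball_zero_iff, Real.norm_eq_abs] at hz
    rw [iteratedDeriv_succ,
      (Filter.eventuallyEq_of_mem (isOpen_ball.mem_nhds hz) ih).deriv_eq]
    exact (hasDerivAt_termwiseIterDeriv ha j hz').deriv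

theorem termwiseIterDeriv_ode (ha : ∀ n, |a n| ≤ C) (ha₁ : a 1 = 0)
    (hrec : ∀ n : ℕ, ((n : ℝ) + 2) ^ 2 * a (n + 2) = ((n : ℝ) + 1) ^ 2 * a n) {z : ℝ}
    (hz : |z| < 1) :
    z * (z ^ 2 - 1) * termwiseIterDeriv a 2 z + (3 * z ^ 2 - 1) * termwiseIterDeriv a 1 z +
      z * termwiseIterDeriv a 0 z = 0 := by
  set s : ℕ → ℕ → ℝ := fun j n => a n * (n.descFactorial j * z ^ (n - j))
  set T : ℕ → ℝ := fun n => z * s 2 n + s 1 n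
  have hs (j : ℕ) : Summable (s j) := summable_termwiseIterDeriv ha j hz
  have hT : Summable T := ((hs 2).mul_left z).add (hs 1)
  have hterm (n : ℕ) :
      T (n + 2) - T n = z * (z ^ 2 - 1) * s 2 n + (3 * z ^ 2 - 1) * s 1 n + z * s 0 n := by
    have hT₂ : T (n + 2) = ((n : ℝ) + 1) ^ 2 * a n * z ^ (n + 1) := by
      simp only [T, s, Nat.descFactorial_succ]
      push_cast
      simp
      linear_combination z ^ (n + 1) * hrec n
    rw [hT₂]
    rcases n with _ | _ | n
    · simp [T, s]
      ring
    · simp [T, s, ha₁]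
    · simp [T, s, Nat.descFactorial_succ]
      ring
  have hsum : HasSum _ (z * (z ^ 2 - 1) * termwiseIterDeriv a 2 z +
      (3 * z ^ 2 - 1) * termwiseIterDeriv a 1 z + z * termwiseIterDeriv a 0 z) :=
    (((hs 2).hasSum.mul_left _).add ((hs 1).hasSum.mul_left _)).add ((hs 0).hasSum.mul_left z)
  have htel : HasSum (fun n => T (n + 2) - T n) (-(T 0 + T 1)) := by
    have h := ((summable_nat_add_iff 2).mpr hT).hasSum.sub hT.hasSum
    rwa [← hT.sum_add_tsum_nat_add 2, Finset.sum_range_succ, Finset.sum_range_one,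
      sub_add_cancel_right] at h
  rw [(hsum.congr_fun hterm).unique htel]
  simp [T, s, ha₁]

end BoundedCoeff

/-- The LGF of the 2D fcc lattice satisfies
`z(z²-1) P''(z) + (3z²-1) P'(z) + z P(z) = 0` for `|z| < 1`. -/
theorem lgf2_ode (z : ℝ) (hz : |z| < 1) :
    z * (z ^ 2 - 1) * iteratedDeriv 2 lgf2 z +
      (3 * z ^ 2 - 1) * deriv lgf2 z + z * lgf2 z = 0 := by
  have hz' : z ∈ ball (0 : ℝ) 1 := by rwa [mem_ball_zero_iff, Real.norm_eq_abs]
  have hseries : Set.EqOn lgf2 (termwiseIterDeriv lgf2Coeff 0) (ball 0 1) := fun w hw => by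
    rw [mem_ball_zero_iff, Real.norm_eq_abs] at hw
    simpa [termwiseIterDeriv] using (hasSum_lgf2 hw).tsum_eq.symm
  have hderiv := eqOn_iteratedDeriv_termwiseIterDeriv abs_lgf2Coeff_le_one hseries
  rw [hderiv 2 hz', ← iteratedDeriv_one, hderiv 1 hz', hseries hz']
  exact termwiseIterDeriv_ode abs_lgf2Coeff_le_one lgf2Coeff_one lgf2Coeff_add_two hz
end

section
/- With f, G_1, G_2, G_3 as above, the operator z(z^2-1) D_z^2 + (3z^2-1) D_z + z + D_{x_1} ∘ ((x_2 - x_1^2 x_2)/(x_1 x_2 z - 1)) + D_{x_2} ∘ ((x_2 z - x_2^3 z)/(x_1 x_2 z - 1)) annihilates f(x_1, x_2, z); equivalently, it equals the operator linear combination ( (z(z^2-1)/(x_1 x_2 z - 1)) D_z + (x_1 x_2 z (z^2+1) - 3z^2 + 1)/(x_1 x_2 z - 1)^2 ) G_1 - (x_2/(x_1 x_2 z - 1)^2)(z G_2 + G_3). -/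
/-- The integrand `f(x₁,x₂,z) = 1/((1-zx₁x₂)√(1-x₁²)√(1-x₂²))`. -/
noncomputable def fcc2Integrand (x₁ x₂ z : ℝ) : ℝ :=
  1 / ((1 - z * x₁ * x₂) * Real.sqrt (1 - x₁ ^ 2) * Real.sqrt (1 - x₂ ^ 2))

/-- Partial derivative with respect to `z`. -/
noncomputable def Dz (g : ℝ → ℝ → ℝ → ℝ) : ℝ → ℝ → ℝ → ℝ :=
  fun x₁ x₂ z => deriv (fun t => g x₁ x₂ t) z

/-- Partial derivative with respect to `x₁`. -/
noncomputable def Dx₁ (g : ℝ → ℝ → ℝ → ℝ) : ℝ → ℝ → ℝ → ℝ :=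
  fun x₁ x₂ z => deriv (fun t => g t x₂ z) x₁

/-- Partial derivative with respect to `x₂`. -/
noncomputable def Dx₂ (g : ℝ → ℝ → ℝ → ℝ) : ℝ → ℝ → ℝ → ℝ :=
  fun x₁ x₂ z => deriv (fun t => g x₁ t z) x₂

/-- The operator `G₁ = (x₁x₂z - 1) D_z + x₁x₂`. -/
noncomputable def opG₁ (g : ℝ → ℝ → ℝ → ℝ) : ℝ → ℝ → ℝ → ℝ :=
  fun x₁ x₂ z => (x₁ * x₂ * z - 1) * Dz g x₁ x₂ z + x₁ * x₂ * g x₁ x₂ z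

/-- The operator `G₂ = (x₂²-1)(x₁x₂z-1) D_{x₂} + (2x₁x₂²z - x₁z - x₂)`. -/
noncomputable def opG₂ (g : ℝ → ℝ → ℝ → ℝ) : ℝ → ℝ → ℝ → ℝ :=
  fun x₁ x₂ z => (x₂ ^ 2 - 1) * (x₁ * x₂ * z - 1) * Dx₂ g x₁ x₂ z +
    (2 * x₁ * x₂ ^ 2 * z - x₁ * z - x₂) * g x₁ x₂ z

/-- The operator `G₃ = (x₁²-1)(x₁x₂z-1) D_{x₁} + (2x₁²x₂z - x₁ - x₂z)`. -/
noncomputable def opG₃ (g : ℝ → ℝ → ℝ → ℝ) : ℝ → ℝ → ℝ → ℝ :=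
  fun x₁ x₂ z => (x₁ ^ 2 - 1) * (x₁ * x₂ * z - 1) * Dx₁ g x₁ x₂ z +
    (2 * x₁ ^ 2 * x₂ * z - x₁ - x₂ * z) * g x₁ x₂ z

/-- The creative telescoping operator
`z(z²-1)D_z² + (3z²-1)D_z + z + D_{x₁}∘((x₂-x₁²x₂)/(x₁x₂z-1)) + D_{x₂}∘((x₂z-x₂³z)/(x₁x₂z-1))`
(where `D_x ∘ r` means: first multiply by `r`, then differentiate). -/
noncomputable def opCT (g : ℝ → ℝ → ℝ → ℝ) : ℝ → ℝ → ℝ → ℝ :=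
  fun x₁ x₂ z =>
    z * (z ^ 2 - 1) * Dz (Dz g) x₁ x₂ z + (3 * z ^ 2 - 1) * Dz g x₁ x₂ z +
      z * g x₁ x₂ z +
      Dx₁ (fun a b c => ((b - a ^ 2 * b) / (a * b * c - 1)) * g a b c) x₁ x₂ z +
      Dx₂ (fun a b c => ((b * c - b ^ 3 * c) / (a * b * c - 1)) * g a b c) x₁ x₂ z

/-- The linear combination
`((z(z²-1)/(x₁x₂z-1)) D_z + (x₁x₂z(z²+1)-3z²+1)/(x₁x₂z-1)²) G₁ - (x₂/(x₁x₂z-1)²)(z G₂ + G₃)`. -/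
noncomputable def opComb (g : ℝ → ℝ → ℝ → ℝ) : ℝ → ℝ → ℝ → ℝ :=
  fun x₁ x₂ z =>
    (z * (z ^ 2 - 1) / (x₁ * x₂ * z - 1)) * Dz (opG₁ g) x₁ x₂ z +
      ((x₁ * x₂ * z * (z ^ 2 + 1) - 3 * z ^ 2 + 1) / (x₁ * x₂ * z - 1) ^ 2) *
        opG₁ g x₁ x₂ z -
      (x₂ / (x₁ * x₂ * z - 1) ^ 2) * (z * opG₂ g x₁ x₂ z + opG₃ g x₁ x₂ z)


section fcc2Aux

private lemma fcc2_key (g : ℝ → ℝ → ℝ → ℝ) (x₁ x₂ z : ℝ) (h : x₁ * x₂ * z ≠ 1)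
    (h1z : DifferentiableAt ℝ (fun t => g x₁ x₂ t) z)
    (h2z : DifferentiableAt ℝ (fun t => Dz g x₁ x₂ t) z)
    (h1 : DifferentiableAt ℝ (fun t => g t x₂ z) x₁)
    (h2 : DifferentiableAt ℝ (fun t => g x₁ t z) x₂) :
    opCT g x₁ x₂ z = opComb g x₁ x₂ z := by
  have hw : x₁ * x₂ * z - 1 ≠ 0 := sub_ne_zero.mpr h
  have hA : HasDerivAt (fun t : ℝ => x₁ * x₂ * t - 1) (x₁ * x₂) z := by
    simpa using ((hasDerivAt_id z).const_mul (x₁ * x₂)).sub_const 1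
  have hDg : HasDerivAt (fun t => Dz g x₁ x₂ t)
      (deriv (fun t => deriv (fun s => g x₁ x₂ s) t) z) z := h2z.hasDerivAt
  have hg : HasDerivAt (fun t => g x₁ x₂ t) (deriv (fun s => g x₁ x₂ s) z) z := h1z.hasDerivAt
  have E1 : deriv (fun t => (x₁ * x₂ * t - 1) * deriv (fun s => g x₁ x₂ s) t
        + x₁ * x₂ * g x₁ x₂ t) z
      = (x₁ * x₂ * deriv (fun s => g x₁ x₂ s) z
          + (x₁ * x₂ * z - 1) * deriv (fun t => deriv (fun s => g x₁ x₂ s) t) z)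
        + x₁ * x₂ * deriv (fun s => g x₁ x₂ s) z :=
    ((hA.mul hDg).add (hg.const_mul (x₁ * x₂))).deriv
  have hnum1 : HasDerivAt (fun a : ℝ => x₂ - a ^ 2 * x₂) (-(2 * x₁ * x₂)) x₁ := by
    simpa [mul_assoc] using ((hasDerivAt_pow 2 x₁).mul_const x₂).const_sub x₂
  have hden1 : HasDerivAt (fun a : ℝ => a * x₂ * z - 1) (x₂ * z) x₁ := by
    simpa using (((hasDerivAt_id x₁).mul_const x₂).mul_const z).sub_const 1
  have hr1 := hnum1.div hden1 hw
  have E2 : deriv (fun t => (x₂ - t ^ 2 * x₂) / (t * x₂ * z - 1) * g t x₂ z) x₁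
      = (-(2 * x₁ * x₂) * (x₁ * x₂ * z - 1) - (x₂ - x₁ ^ 2 * x₂) * (x₂ * z))
          / (x₁ * x₂ * z - 1) ^ 2 * g x₁ x₂ z
        + (x₂ - x₁ ^ 2 * x₂) / (x₁ * x₂ * z - 1) * deriv (fun t => g t x₂ z) x₁ :=
    (hr1.mul h1.hasDerivAt).deriv
  have hnum2 : HasDerivAt (fun b : ℝ => b * z - b ^ 3 * z) (z - 3 * x₂ ^ 2 * z) x₂ := by
    have := ((hasDerivAt_id x₂).mul_const z).sub ((hasDerivAt_pow 3 x₂).mul_const z)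
    exact this.congr_deriv (by ring)
  have hden2 : HasDerivAt (fun b : ℝ => x₁ * b * z - 1) (x₁ * z) x₂ := by
    simpa [mul_assoc, mul_comm] using (((hasDerivAt_id x₂).const_mul x₁).mul_const z).sub_const 1
  have hr2 := hnum2.div hden2 hw
  have E3 : deriv (fun t => (t * z - t ^ 3 * z) / (x₁ * t * z - 1) * g x₁ t z) x₂
      = ((z - 3 * x₂ ^ 2 * z) * (x₁ * x₂ * z - 1) - (x₂ * z - x₂ ^ 3 * z) * (x₁ * z))
          / (x₁ * x₂ * z - 1) ^ 2 * g x₁ x₂ z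
        + (x₂ * z - x₂ ^ 3 * z) / (x₁ * x₂ * z - 1) * deriv (fun t => g x₁ t z) x₂ :=
    (hr2.mul h2.hasDerivAt).deriv
  simp only [opCT, opComb, opG₁, opG₂, opG₃, Dz, Dx₁, Dx₂]
  rw [E1, E2, E3]
  have hw' : z * x₁ * x₂ - 1 ≠ 0 := by intro hc; apply hw; linarith
  field_simp
  ring

private lemma fcc2_hasDerivAt_z (x₁ x₂ t : ℝ) (hs₁ : Real.sqrt (1 - x₁ ^ 2) ≠ 0)
    (hs₂ : Real.sqrt (1 - x₂ ^ 2) ≠ 0) (h : 1 - t * x₁ * x₂ ≠ 0) :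
    HasDerivAt (fun s => fcc2Integrand x₁ x₂ s)
      (x₁ * x₂ * Real.sqrt (1 - x₁ ^ 2) * Real.sqrt (1 - x₂ ^ 2)
        / ((1 - t * x₁ * x₂) * Real.sqrt (1 - x₁ ^ 2) * Real.sqrt (1 - x₂ ^ 2)) ^ 2) t := by
  have hb : HasDerivAt
      (fun s : ℝ => (1 - s * x₁ * x₂) * Real.sqrt (1 - x₁ ^ 2) * Real.sqrt (1 - x₂ ^ 2))
      (-(x₁ * x₂) * Real.sqrt (1 - x₁ ^ 2) * Real.sqrt (1 - x₂ ^ 2)) t := by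
    have := (((((hasDerivAt_id t).mul_const x₁).mul_const x₂).const_sub 1).mul_const
      (Real.sqrt (1 - x₁ ^ 2))).mul_const (Real.sqrt (1 - x₂ ^ 2))
    simpa using this
  have hne : (1 - t * x₁ * x₂) * Real.sqrt (1 - x₁ ^ 2) * Real.sqrt (1 - x₂ ^ 2) ≠ 0 :=
    mul_ne_zero (mul_ne_zero h hs₁) hs₂
  have hinv := hb.inv hne
  have heq : (fun s => fcc2Integrand x₁ x₂ s)
      = fun s : ℝ => ((1 - s * x₁ * x₂) * Real.sqrt (1 - x₁ ^ 2) * Real.sqrt (1 - x₂ ^ 2))⁻¹ := by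
    funext s; simp [fcc2Integrand, one_div]
  rw [heq]
  refine hinv.congr_deriv ?_
  ring

private lemma fcc2_hasDerivAt_x₁ (x₁ x₂ z : ℝ) (h1 : 0 < 1 - x₁ ^ 2)
    (hs₂ : Real.sqrt (1 - x₂ ^ 2) ≠ 0) (h : 1 - z * x₁ * x₂ ≠ 0) :
    HasDerivAt (fun a => fcc2Integrand a x₂ z)
      ((z * x₂ * Real.sqrt (1 - x₁ ^ 2) ^ 2 + (1 - z * x₁ * x₂) * x₁) * Real.sqrt (1 - x₂ ^ 2)
        / (Real.sqrt (1 - x₁ ^ 2)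
            * ((1 - z * x₁ * x₂) * Real.sqrt (1 - x₁ ^ 2) * Real.sqrt (1 - x₂ ^ 2)) ^ 2)) x₁ := by
  have hs₁pos : 0 < Real.sqrt (1 - x₁ ^ 2) := Real.sqrt_pos.mpr h1
  have hA : HasDerivAt (fun a : ℝ => 1 - z * a * x₂) (-(z * x₂)) x₁ := by
    simpa using (((hasDerivAt_id x₁).const_mul z).mul_const x₂).const_sub 1
  have hin : HasDerivAt (fun a : ℝ => 1 - a ^ 2) (-(2 * x₁)) x₁ := by
    simpa using (hasDerivAt_pow 2 x₁).const_sub 1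
  have hsq : HasDerivAt (fun a : ℝ => Real.sqrt (1 - a ^ 2))
      (-(x₁ / Real.sqrt (1 - x₁ ^ 2))) x₁ := by
    have := (Real.hasDerivAt_sqrt h1.ne').comp x₁ hin
    refine this.congr_deriv ?_
    field_simp
  have hu := (hA.mul hsq).mul_const (Real.sqrt (1 - x₂ ^ 2))
  have hne : (1 - z * x₁ * x₂) * Real.sqrt (1 - x₁ ^ 2) * Real.sqrt (1 - x₂ ^ 2) ≠ 0 :=
    mul_ne_zero (mul_ne_zero h hs₁pos.ne') hs₂
  have hinv := hu.inv hne
  have heq : (fun a => fcc2Integrand a x₂ z)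
      = fun a : ℝ => ((1 - z * a * x₂) * Real.sqrt (1 - a ^ 2) * Real.sqrt (1 - x₂ ^ 2))⁻¹ := by
    funext a; simp [fcc2Integrand, one_div]
  rw [heq]
  refine hinv.congr_deriv ?_
  simp only [Pi.mul_apply]
  field_simp
  ring

private lemma fcc2_hasDerivAt_x₂ (x₁ x₂ z : ℝ) (h2 : 0 < 1 - x₂ ^ 2)
    (hs₁ : Real.sqrt (1 - x₁ ^ 2) ≠ 0) (h : 1 - z * x₁ * x₂ ≠ 0) :
    HasDerivAt (fun b => fcc2Integrand x₁ b z)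
      ((z * x₁ * Real.sqrt (1 - x₂ ^ 2) ^ 2 + (1 - z * x₁ * x₂) * x₂) * Real.sqrt (1 - x₁ ^ 2)
        / (Real.sqrt (1 - x₂ ^ 2)
            * ((1 - z * x₁ * x₂) * Real.sqrt (1 - x₁ ^ 2) * Real.sqrt (1 - x₂ ^ 2)) ^ 2)) x₂ := by
  have hs₂pos : 0 < Real.sqrt (1 - x₂ ^ 2) := Real.sqrt_pos.mpr h2
  have hA : HasDerivAt (fun b : ℝ => 1 - z * x₁ * b) (-(z * x₁)) x₂ := by
    simpa using ((hasDerivAt_id x₂).const_mul (z * x₁)).const_sub 1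
  have hin : HasDerivAt (fun b : ℝ => 1 - b ^ 2) (-(2 * x₂)) x₂ := by
    simpa using (hasDerivAt_pow 2 x₂).const_sub 1
  have hsq : HasDerivAt (fun b : ℝ => Real.sqrt (1 - b ^ 2))
      (-(x₂ / Real.sqrt (1 - x₂ ^ 2))) x₂ := by
    have := (Real.hasDerivAt_sqrt h2.ne').comp x₂ hin
    refine this.congr_deriv ?_
    field_simp
  have hu := ((hA.mul_const (Real.sqrt (1 - x₁ ^ 2))).mul hsq)
  have hne : (1 - z * x₁ * x₂) * Real.sqrt (1 - x₁ ^ 2) * Real.sqrt (1 - x₂ ^ 2) ≠ 0 :=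
    mul_ne_zero (mul_ne_zero h hs₁) hs₂pos.ne'
  have hinv := hu.inv hne
  have heq : (fun b => fcc2Integrand x₁ b z)
      = fun b : ℝ => ((1 - z * x₁ * b) * Real.sqrt (1 - x₁ ^ 2) * Real.sqrt (1 - b ^ 2))⁻¹ := by
    funext b; simp [fcc2Integrand, one_div]
  rw [heq]
  refine hinv.congr_deriv ?_
  simp only [Pi.mul_apply]
  field_simp
  ring

private lemma fcc2_opG₁_f (x₁ x₂ t : ℝ) (hs₁ : Real.sqrt (1 - x₁ ^ 2) ≠ 0)
    (hs₂ : Real.sqrt (1 - x₂ ^ 2) ≠ 0) (h : 1 - t * x₁ * x₂ ≠ 0) :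
    opG₁ fcc2Integrand x₁ x₂ t = 0 := by
  have hd := (fcc2_hasDerivAt_z x₁ x₂ t hs₁ hs₂ h).deriv
  simp only [opG₁, Dz]
  rw [hd]
  simp only [fcc2Integrand]
  field_simp
  ring

private lemma fcc2_opG₃_f (x₁ x₂ z : ℝ) (h1 : 0 < 1 - x₁ ^ 2)
    (hs₂ : Real.sqrt (1 - x₂ ^ 2) ≠ 0) (h : 1 - z * x₁ * x₂ ≠ 0) :
    opG₃ fcc2Integrand x₁ x₂ z = 0 := by
  have hs₁pos : 0 < Real.sqrt (1 - x₁ ^ 2) := Real.sqrt_pos.mpr h1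
  have hd := (fcc2_hasDerivAt_x₁ x₁ x₂ z h1 hs₂ h).deriv
  have hV : (1 - z * x₁ * x₂) * Real.sqrt (1 - x₁ ^ 2) * Real.sqrt (1 - x₂ ^ 2) ≠ 0 :=
    mul_ne_zero (mul_ne_zero h hs₁pos.ne') hs₂
  have hQ : Real.sqrt (1 - x₁ ^ 2)
      * ((1 - z * x₁ * x₂) * Real.sqrt (1 - x₁ ^ 2) * Real.sqrt (1 - x₂ ^ 2)) ^ 2 ≠ 0 :=
    mul_ne_zero hs₁pos.ne' (pow_ne_zero 2 hV)
  have hF : fcc2Integrand x₁ x₂ z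
      = 1 / ((1 - z * x₁ * x₂) * Real.sqrt (1 - x₁ ^ 2) * Real.sqrt (1 - x₂ ^ 2)) := rfl
  simp only [opG₃, Dx₁]
  rw [hd, hF, ← mul_div_assoc, mul_one_div, div_add_div _ _ hQ hV, div_eq_zero_iff]
  left
  linear_combination (Real.sqrt (1 - x₁ ^ 2) * Real.sqrt (1 - x₂ ^ 2) ^ 2 * (1 - z * x₁ * x₂)
    * ((x₁ ^ 2 - 1) * (x₁ * x₂ * z - 1) * z * x₂
      + (1 - z * x₁ * x₂) * (2 * x₁ ^ 2 * x₂ * z - x₁ - x₂ * z))) * Real.sq_sqrt h1.le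

private lemma fcc2_opG₂_f (x₁ x₂ z : ℝ) (h2 : 0 < 1 - x₂ ^ 2)
    (hs₁ : Real.sqrt (1 - x₁ ^ 2) ≠ 0) (h : 1 - z * x₁ * x₂ ≠ 0) :
    opG₂ fcc2Integrand x₁ x₂ z = 0 := by
  have hs₂pos : 0 < Real.sqrt (1 - x₂ ^ 2) := Real.sqrt_pos.mpr h2
  have hd := (fcc2_hasDerivAt_x₂ x₁ x₂ z h2 hs₁ h).deriv
  have hV : (1 - z * x₁ * x₂) * Real.sqrt (1 - x₁ ^ 2) * Real.sqrt (1 - x₂ ^ 2) ≠ 0 :=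
    mul_ne_zero (mul_ne_zero h hs₁) hs₂pos.ne'
  have hQ : Real.sqrt (1 - x₂ ^ 2)
      * ((1 - z * x₁ * x₂) * Real.sqrt (1 - x₁ ^ 2) * Real.sqrt (1 - x₂ ^ 2)) ^ 2 ≠ 0 :=
    mul_ne_zero hs₂pos.ne' (pow_ne_zero 2 hV)
  have hF : fcc2Integrand x₁ x₂ z
      = 1 / ((1 - z * x₁ * x₂) * Real.sqrt (1 - x₁ ^ 2) * Real.sqrt (1 - x₂ ^ 2)) := rfl
  simp only [opG₂, Dx₂]
  rw [hd, hF, ← mul_div_assoc, mul_one_div, div_add_div _ _ hQ hV, div_eq_zero_iff]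
  left
  linear_combination (Real.sqrt (1 - x₂ ^ 2) * Real.sqrt (1 - x₁ ^ 2) ^ 2 * (1 - z * x₁ * x₂)
    * ((x₂ ^ 2 - 1) * (x₁ * x₂ * z - 1) * z * x₁
      + (1 - z * x₁ * x₂) * (2 * x₁ * x₂ ^ 2 * z - x₁ * z - x₂))) * Real.sq_sqrt h2.le

end fcc2Aux

/-- The creative telescoping operator annihilates `f`; equivalently, it equals the
stated linear combination of `G₁`, `G₂`, `G₃` as an operator on smooth functions
(wherever `x₁x₂z ≠ 1`). -/
theorem fcc2_creative_telescoping :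
    (∀ x₁ x₂ z : ℝ, |x₁| < 1 → |x₂| < 1 → |z| < 1 →
        opCT fcc2Integrand x₁ x₂ z = 0) ∧
    (∀ g : ℝ → ℝ → ℝ → ℝ,
        ContDiff ℝ (⊤ : ℕ∞) (fun p : ℝ × ℝ × ℝ => g p.1 p.2.1 p.2.2) →
        ∀ x₁ x₂ z : ℝ, x₁ * x₂ * z ≠ 1 →
          opCT g x₁ x₂ z = opComb g x₁ x₂ z) := by
  constructor
  · intro x₁ x₂ z hx₁ hx₂ hz
    obtain ⟨hx₁a, hx₁b⟩ := abs_lt.mp hx₁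
    obtain ⟨hx₂a, hx₂b⟩ := abs_lt.mp hx₂
    obtain ⟨hza, hzb⟩ := abs_lt.mp hz
    have h1 : 0 < 1 - x₁ ^ 2 := by nlinarith
    have h2 : 0 < 1 - x₂ ^ 2 := by nlinarith
    have hs₁ : Real.sqrt (1 - x₁ ^ 2) ≠ 0 := (Real.sqrt_pos.mpr h1).ne'
    have hs₂ : Real.sqrt (1 - x₂ ^ 2) ≠ 0 := (Real.sqrt_pos.mpr h2).ne'
    have habs : |z * x₁ * x₂| < 1 := by
      rw [abs_mul, abs_mul]
      nlinarith [abs_nonneg z, abs_nonneg x₁, abs_nonneg x₂,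
        mul_nonneg (abs_nonneg z) (abs_nonneg x₁)]
    have hltz : z * x₁ * x₂ < 1 := (abs_lt.mp habs).2
    have hden : 1 - z * x₁ * x₂ ≠ 0 := ne_of_gt (by linarith)
    have hne1 : x₁ * x₂ * z ≠ 1 := by
      have e : x₁ * x₂ * z = z * x₁ * x₂ := by ring
      rw [e]; exact ne_of_lt hltz
    have hU : ∀ᶠ t in nhds z, 1 - t * x₁ * x₂ ≠ 0 := by
      have hc : ContinuousAt (fun t : ℝ => 1 - t * x₁ * x₂) z := by fun_prop
      exact hc.eventually_ne hden
    have hVne : (1 - z * x₁ * x₂) * Real.sqrt (1 - x₁ ^ 2) * Real.sqrt (1 - x₂ ^ 2) ≠ 0 :=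
      mul_ne_zero (mul_ne_zero hden hs₁) hs₂
    have h1z : DifferentiableAt ℝ (fun t => fcc2Integrand x₁ x₂ t) z :=
      (fcc2_hasDerivAt_z x₁ x₂ z hs₁ hs₂ hden).differentiableAt
    have h2z : DifferentiableAt ℝ (fun t => Dz fcc2Integrand x₁ x₂ t) z := by
      have hevd : (fun t => Dz fcc2Integrand x₁ x₂ t) =ᶠ[nhds z]
          (fun t => x₁ * x₂ * Real.sqrt (1 - x₁ ^ 2) * Real.sqrt (1 - x₂ ^ 2)
            / ((1 - t * x₁ * x₂) * Real.sqrt (1 - x₁ ^ 2) * Real.sqrt (1 - x₂ ^ 2)) ^ 2) :=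
        hU.mono fun t ht => (fcc2_hasDerivAt_z x₁ x₂ t hs₁ hs₂ ht).deriv
      have hdd : DifferentiableAt ℝ
          (fun t => x₁ * x₂ * Real.sqrt (1 - x₁ ^ 2) * Real.sqrt (1 - x₂ ^ 2)
            / ((1 - t * x₁ * x₂) * Real.sqrt (1 - x₁ ^ 2) * Real.sqrt (1 - x₂ ^ 2)) ^ 2) z :=
        DifferentiableAt.div (differentiableAt_const _) (by fun_prop) (pow_ne_zero 2 hVne)
      exact hdd.congr_of_eventuallyEq hevd
    have h1d : DifferentiableAt ℝ (fun t => fcc2Integrand t x₂ z) x₁ :=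
      (fcc2_hasDerivAt_x₁ x₁ x₂ z h1 hs₂ hden).differentiableAt
    have h2d : DifferentiableAt ℝ (fun t => fcc2Integrand x₁ t z) x₂ :=
      (fcc2_hasDerivAt_x₂ x₁ x₂ z h2 hs₁ hden).differentiableAt
    rw [fcc2_key fcc2Integrand x₁ x₂ z hne1 h1z h2z h1d h2d]
    have hG1 : opG₁ fcc2Integrand x₁ x₂ z = 0 := fcc2_opG₁_f x₁ x₂ z hs₁ hs₂ hden
    have hG2 : opG₂ fcc2Integrand x₁ x₂ z = 0 := fcc2_opG₂_f x₁ x₂ z h2 hs₁ hden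
    have hG3 : opG₃ fcc2Integrand x₁ x₂ z = 0 := fcc2_opG₃_f x₁ x₂ z h1 hs₂ hden
    have hDzG1 : Dz (opG₁ fcc2Integrand) x₁ x₂ z = 0 := by
      have hev : (fun t => opG₁ fcc2Integrand x₁ x₂ t) =ᶠ[nhds z] (fun _ => (0 : ℝ)) :=
        hU.mono fun t ht => fcc2_opG₁_f x₁ x₂ t hs₁ hs₂ ht
      have hder : deriv (fun t => opG₁ fcc2Integrand x₁ x₂ t) z
          = deriv (fun _ : ℝ => (0 : ℝ)) z := hev.deriv_eq
      simpa [Dz] using hder.trans (deriv_const z 0)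
    simp only [opComb, hG1, hG2, hG3, hDzG1]
    ring
  · intro g hg x₁ x₂ z h
    have hgz : ContDiff ℝ (⊤ : ℕ∞) (fun t : ℝ => g x₁ x₂ t) :=
      hg.comp ((contDiff_const.prodMk (contDiff_const.prodMk contDiff_id)))
    have hgx₁ : ContDiff ℝ (⊤ : ℕ∞) (fun t : ℝ => g t x₂ z) :=
      hg.comp ((contDiff_id.prodMk (contDiff_const.prodMk contDiff_const)))
    have hgx₂ : ContDiff ℝ (⊤ : ℕ∞) (fun t : ℝ => g x₁ t z) :=
      hg.comp ((contDiff_const.prodMk (contDiff_id.prodMk contDiff_const)))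
    have h1z : DifferentiableAt ℝ (fun t => g x₁ x₂ t) z :=
      (hgz.differentiable (by simp)).differentiableAt
    have h2z : DifferentiableAt ℝ (fun t => Dz g x₁ x₂ t) z := by
      have hgz' : ContDiff ℝ ((⊤ : ℕ∞) : WithTop ℕ∞) (fun t : ℝ => g x₁ x₂ t) :=
        hgz.of_le (by simp)
      have hder := (contDiff_infty_iff_deriv.mp hgz').2
      exact (hder.differentiable (by simp)).differentiableAt
    have h1d : DifferentiableAt ℝ (fun t => g t x₂ z) x₁ :=
      (hgx₁.differentiable (by simp)).differentiableAt
    have h2d : DifferentiableAt ℝ (fun t => g x₁ t z) x₂ :=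
      (hgx₂.differentiable (by simp)).differentiableAt
    exact fcc2_key g x₁ x₂ z h h1z h2z h1d h2d
end

section
/- Let g(x_2, z) = integral from -1 to 1 of f(x_1, x_2, z) dx_1, where f(x_1,x_2,z) = 1/((1 - z x_1 x_2) sqrt(1-x_1^2) sqrt(1-x_2^2)). Then (x_2^2 z^2 - 1) * dg/dz + x_2^2 z * g = 0 for |x_2| < 1 and |z| < 1. -/
/-- The inner integral `g(x₂,z) = ∫_{-1}^{1} f(x₁,x₂,z) dx₁`. -/
noncomputable def innerInt (x₂ z : ℝ) : ℝ :=
  ∫ x₁ in (-1:ℝ)..1, fcc2Integrand x₁ x₂ z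

open Real Set Filter Topology

lemma one_sub_mul_pos_of_mem_Icc {a x : ℝ} (ha : |a| < 1) (hx : x ∈ Icc (-1 : ℝ) 1) :
    0 < 1 - a * x := by
  have : |a * x| < 1 := by
    rw [abs_mul]
    nlinarith [abs_nonneg a, abs_nonneg x, abs_le.2 hx]
  linarith [(abs_lt.1 this).2]

lemma one_sub_sq_div_one_sub_mul {a x : ℝ} (h : 1 - a * x ≠ 0) :
    1 - ((x - a) / (1 - a * x)) ^ 2 = (1 - a ^ 2) * (1 - x ^ 2) / (1 - a * x) ^ 2 := by
  rw [div_pow, eq_div_iff (pow_ne_zero 2 h), sub_mul, div_mul_cancel₀ _ (pow_ne_zero 2 h)]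
  ring

lemma hasDerivAt_arcsin_div_one_sub_mul {a x : ℝ} (ha : |a| < 1) (hx : x ∈ Ioo (-1 : ℝ) 1) :
    HasDerivAt (fun x => arcsin ((x - a) / (1 - a * x)))
      (√(1 - a ^ 2) / ((1 - a * x) * √(1 - x ^ 2))) x := by
  have hax : 0 < 1 - a * x := one_sub_mul_pos_of_mem_Icc ha (Ioo_subset_Icc_self hx)
  have ha2 : 0 < 1 - a ^ 2 := sub_pos.2 ((sq_lt_one_iff_abs_lt_one a).2 ha)
  have hx2 : 0 < 1 - x ^ 2 := by nlinarith [hx.1, hx.2]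
  have hsq := one_sub_sq_div_one_sub_mul (a := a) hax.ne'
  have hu : HasDerivAt (fun x => (x - a) / (1 - a * x)) ((1 - a ^ 2) / (1 - a * x) ^ 2) x := by
    refine (((hasDerivAt_id x).sub_const a).div
      (((hasDerivAt_id x).const_mul a).const_sub 1) hax.ne').congr_deriv ?_
    simp only [id]
    field_simp
    ring
  have hu1 : 0 < 1 - ((x - a) / (1 - a * x)) ^ 2 := by rw [hsq]; positivity
  have hne : (x - a) / (1 - a * x) ≠ -1 ∧ (x - a) / (1 - a * x) ≠ 1 := by
    constructor <;> intro h <;> rw [h] at hu1 <;> norm_num at hu1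
  refine ((hasDerivAt_arcsin hne.1 hne.2).comp x hu).congr_deriv ?_
  rw [hsq, sqrt_div' _ (sq_nonneg _), sqrt_sq hax.le, sqrt_mul ha2.le]
  have hsx := sqrt_pos.2 hx2
  field_simp
  exact (sq_sqrt ha2.le).symm

theorem integral_one_div_one_sub_mul_mul_sqrt {a : ℝ} (ha : |a| < 1) :
    ∫ x in (-1 : ℝ)..1, 1 / ((1 - a * x) * √(1 - x ^ 2)) = π / √(1 - a ^ 2) := by
  have ha2 : 0 < √(1 - a ^ 2) := sqrt_pos.2 (sub_pos.2 ((sq_lt_one_iff_abs_lt_one a).2 ha))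
  have hpos : ∀ x ∈ Ioo (-1 : ℝ) 1, 0 ≤ √(1 - a ^ 2) / ((1 - a * x) * √(1 - x ^ 2)) :=
    fun x hx => div_nonneg ha2.le
      (mul_nonneg (one_sub_mul_pos_of_mem_Icc ha (Ioo_subset_Icc_self hx)).le (sqrt_nonneg _))
  have hcont : ContinuousOn (fun x => arcsin ((x - a) / (1 - a * x))) (Icc (-1) 1) :=
    continuous_arcsin.comp_continuousOn <| (continuousOn_id.sub continuousOn_const).div
      (continuousOn_const.sub (continuousOn_const.mul continuousOn_id))
      fun x hx => (one_sub_mul_pos_of_mem_Icc ha hx).ne'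
  have hderiv := fun x (hx : x ∈ Ioo (-1 : ℝ) 1) => hasDerivAt_arcsin_div_one_sub_mul ha hx
  have hint : IntervalIntegrable (fun x => √(1 - a ^ 2) / ((1 - a * x) * √(1 - x ^ 2)))
      MeasureTheory.volume (-1) 1 :=
    (intervalIntegrable_iff_integrableOn_Ioc_of_le (by norm_num)).2
      (intervalIntegral.integrableOn_deriv_of_nonneg hcont hderiv hpos)
  have hftc := intervalIntegral.integral_eq_sub_of_hasDerivAt_of_le (by norm_num) hcont hderiv hint
  have h1 : (1 - a) / (1 - a * 1) = 1 := by
    rw [mul_one]; exact div_self (by linarith [(abs_lt.1 ha).2])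
  have hm1 : (-1 - a) / (1 - a * -1) = -1 := by
    rw [div_eq_iff (by linarith [(abs_lt.1 ha).1])]; ring
  simp only [h1, hm1, arcsin_one, arcsin_neg_one, sub_neg_eq_add, add_halves,
    ← mul_one_div (√(1 - a ^ 2)), intervalIntegral.integral_const_mul] at hftc
  rw [eq_div_iff ha2.ne', mul_comm, hftc]

lemma innerInt_eq {x₂ t : ℝ} (h : |t * x₂| < 1) :
    innerInt x₂ t = π / √(1 - x₂ ^ 2) * (√(1 - x₂ ^ 2 * t ^ 2))⁻¹ := by
  have hf : ∀ x₁, fcc2Integrand x₁ x₂ t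
      = 1 / ((1 - t * x₂ * x₁) * √(1 - x₁ ^ 2)) / √(1 - x₂ ^ 2) := fun x₁ => by
    rw [fcc2Integrand, div_div, mul_right_comm t]
  rw [innerInt, intervalIntegral.integral_congr fun x₁ _ => hf x₁, intervalIntegral.integral_div,
    integral_one_div_one_sub_mul_mul_sqrt h, mul_pow, mul_comm (t ^ 2)]
  ring

lemma hasDerivAt_inv_sqrt_one_sub_mul_sq {c t : ℝ} (h : 0 < 1 - c * t ^ 2) :
    HasDerivAt (fun t => (√(1 - c * t ^ 2))⁻¹)
      (c * t / (1 - c * t ^ 2) * (√(1 - c * t ^ 2))⁻¹) t := by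
  have hs := sqrt_pos.2 h
  refine (((((hasDerivAt_pow 2 t).const_mul c).const_sub 1).sqrt h.ne').inv hs.ne').congr_deriv ?_
  field_simp
  rw [sq_sqrt h.le]
  ring

lemma one_sub_sq_mul_sq_pos {x z : ℝ} (h : |z * x| < 1) : 0 < 1 - x ^ 2 * z ^ 2 := by
  linarith [mul_pow z x 2, (sq_lt_one_iff_abs_lt_one _).2 h]

theorem hasDerivAt_innerInt {x₂ z : ℝ} (h : |z * x₂| < 1) :
    HasDerivAt (innerInt x₂) (x₂ ^ 2 * z / (1 - x₂ ^ 2 * z ^ 2) * innerInt x₂ z) z := by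
  have hpos := one_sub_sq_mul_sq_pos h
  have hopen : IsOpen {t : ℝ | |t * x₂| < 1} := isOpen_lt (by fun_prop) continuous_const
  have hev : innerInt x₂ =ᶠ[𝓝 z] fun t => π / √(1 - x₂ ^ 2) * (√(1 - x₂ ^ 2 * t ^ 2))⁻¹ :=
    eventually_of_mem (hopen.mem_nhds h) fun t ht => innerInt_eq ht
  refine (((hasDerivAt_inv_sqrt_one_sub_mul_sq hpos).const_mul _).congr_of_eventuallyEq
    hev).congr_deriv ?_
  rw [innerInt_eq h]
  ring

/-- The telescoped ODE for the inner integral: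
`(x₂²z² - 1) ∂g/∂z + x₂²z · g = 0` for `|x₂| < 1`, `|z| < 1`. -/
theorem innerInt_ode (x₂ z : ℝ) (hx₂ : |x₂| < 1) (hz : |z| < 1) :
    (x₂ ^ 2 * z ^ 2 - 1) * deriv (fun t => innerInt x₂ t) z +
      x₂ ^ 2 * z * innerInt x₂ z = 0 := by
  have h : |z * x₂| < 1 := by
    rw [abs_mul]
    nlinarith [abs_nonneg z, abs_nonneg x₂]
  have hpos := one_sub_sq_mul_sq_pos h
  rw [(hasDerivAt_innerInt h).deriv]
  field_simp
  ring
end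

section
/- For the square lattice Z^2 with steps (±1,0),(0,±1), the number of 2n-step excursions (walks from the origin back to the origin) equals binomial(2n,n)^2, and consequently the return probability equals 1 (the series sum over n of binomial(2n,n)^2 / 16^n diverges). -/
/-- The step set of the square lattice `ℤ²`. -/
def sqSteps : Finset (ℤ × ℤ) := {(1, 0), (-1, 0), (0, 1), (0, -1)}

/-!
The rotation `(x, y) ↦ (x + y, x - y)` maps the four steps bijectively onto `{±1}²`, so a
closed walk of length `2n` is the same as a pair of ±1 sequences of length `2n` that both sum
to zero, and each of these is determined by its set of `n` positive positions. This gives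
`C(2n,n)²` excursions.

For the divergence, `n C(2n,n)² / 16ⁿ` is nondecreasing, since consecutive terms have ratio
`(2n+1)² / (4n(n+1)) ≥ 1`; hence the `n`-th term is at least `1/(4n)`.
-/

open Finset Nat

def boolSign (b : Bool) : ℤ := if b then 1 else -1

section BalancedSigns

variable {ι : Type*} [Fintype ι]

theorem sum_boolSign (f : ι → Bool) :
    ∑ i, boolSign (f i) = 2 * (#{i | f i} : ℤ) - Fintype.card ι := by
  have h (b : Bool) : boolSign b = 2 * (if b then 1 else 0) - 1 := by cases b <;> rfl
  simp only [h, sum_sub_distrib, ← mul_sum, sum_boole, sum_const, nsmul_eq_mul,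
    mul_one, Finset.card_univ]

variable [DecidableEq ι]

def boolFunEquivFinset : (ι → Bool) ≃ Finset ι where
  toFun f := {i | f i}
  invFun s i := decide (i ∈ s)
  left_inv f := by ext i; simp
  right_inv s := by ext i; simp

theorem card_sum_boolSign_eq_zero {n : ℕ} (hι : Fintype.card ι = 2 * n) :
    Fintype.card {f : ι → Bool // ∑ i, boolSign (f i) = 0} = (2 * n).choose n := by
  have e : {f : ι → Bool // ∑ i, boolSign (f i) = 0} ≃ {s : Finset ι // #s = n} :=
    boolFunEquivFinset.subtypeEquiv fun f => by
      change _ ↔ #{i | f i} = n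
      rw [sum_boolSign, hι]
      omega
  rw [Fintype.card_congr e, Fintype.card_finset_len, hι]

end BalancedSigns

theorem sum_eq_zero_iff_sum_add_and_sum_sub {ι : Type*} (s : Finset ι) (v : ι → ℤ × ℤ) :
    ∑ i ∈ s, v i = 0 ↔
      ∑ i ∈ s, ((v i).1 + (v i).2) = 0 ∧ ∑ i ∈ s, ((v i).1 - (v i).2) = 0 := by
  rw [Prod.ext_iff, Prod.fst_sum, Prod.snd_sum, sum_add_distrib, sum_sub_distrib]
  simp only [Prod.fst_zero, Prod.snd_zero]
  omega

def sqStepEquiv : sqSteps ≃ Bool × Bool where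
  toFun s :=
    (decide ((s : ℤ × ℤ).1 + (s : ℤ × ℤ).2 = 1), decide ((s : ℤ × ℤ).1 - (s : ℤ × ℤ).2 = 1))
  invFun p := ⟨((boolSign p.1 + boolSign p.2) / 2, (boolSign p.1 - boolSign p.2) / 2), by
    rcases p with ⟨_ | _, _ | _⟩ <;> decide⟩
  left_inv := by
    rintro ⟨s, hs⟩
    simp only [sqSteps, mem_insert, mem_singleton] at hs
    rcases hs with rfl | rfl | rfl | rfl <;> rfl
  right_inv := by rintro ⟨_ | _, _ | _⟩ <;> rfl

theorem sqStepEquiv_fst (s : sqSteps) :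
    (s : ℤ × ℤ).1 + (s : ℤ × ℤ).2 = boolSign (sqStepEquiv s).1 := by
  rw [← sqStepEquiv.symm_apply_apply s]
  generalize sqStepEquiv s = p
  rcases p with ⟨_ | _, _ | _⟩ <;> rfl

theorem sqStepEquiv_snd (s : sqSteps) :
    (s : ℤ × ℤ).1 - (s : ℤ × ℤ).2 = boolSign (sqStepEquiv s).2 := by
  rw [← sqStepEquiv.symm_apply_apply s]
  generalize sqStepEquiv s = p
  rcases p with ⟨_ | _, _ | _⟩ <;> rfl

theorem card_sqSteps_walks_sum_eq_zero {ι : Type*} [Fintype ι] [DecidableEq ι] {n : ℕ}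
    (hι : Fintype.card ι = 2 * n) :
    Fintype.card {w : ι → sqSteps // ∑ i, (w i : ℤ × ℤ) = 0} = (2 * n).choose n ^ 2 := by
  let rotate : (ι → sqSteps) ≃ (ι → Bool) × (ι → Bool) :=
    (Equiv.piCongrRight fun _ => sqStepEquiv).trans
      (Equiv.arrowProdEquivProdArrow ι (fun _ => Bool) (fun _ => Bool))
  have e : {w : ι → sqSteps // ∑ i, (w i : ℤ × ℤ) = 0} ≃
      {f : ι → Bool // ∑ i, boolSign (f i) = 0} × {g : ι → Bool // ∑ i, boolSign (g i) = 0} :=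
    (rotate.subtypeEquiv fun w => by
      simp only [sum_eq_zero_iff_sum_add_and_sum_sub, sqStepEquiv_fst, sqStepEquiv_snd]
      rfl).trans Equiv.subtypeProdEquivProd
  rw [Fintype.card_congr e, Fintype.card_prod, card_sum_boolSign_eq_zero hι, sq]

theorem sixteen_pow_le_four_mul_mul_centralBinom_sq {n : ℕ} (hn : 0 < n) :
    16 ^ n ≤ 4 * n * centralBinom n ^ 2 := by
  induction n, hn using Nat.le_induction with
  | base => decide
  | succ m _ ih =>
    have hratio : 4 * m * (m + 1) ≤ (2 * m + 1) ^ 2 := by nlinarith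
    suffices 16 ^ (m + 1) * (m + 1) ^ 2 ≤ 4 * (m + 1) * centralBinom (m + 1) ^ 2 * (m + 1) ^ 2 from
      Nat.le_of_mul_le_mul_right this (by positivity)
    calc 16 ^ (m + 1) * (m + 1) ^ 2 = 16 * (m + 1) ^ 2 * 16 ^ m := by ring
      _ ≤ 16 * (m + 1) ^ 2 * (4 * m * centralBinom m ^ 2) := Nat.mul_le_mul_left _ ih
      _ = 16 * (m + 1) * centralBinom m ^ 2 * (4 * m * (m + 1)) := by ring
      _ ≤ 16 * (m + 1) * centralBinom m ^ 2 * (2 * m + 1) ^ 2 := Nat.mul_le_mul_left _ hratio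
      _ = 4 * (m + 1) * (2 * (2 * m + 1) * centralBinom m) ^ 2 := by ring
      _ = 4 * (m + 1) * centralBinom (m + 1) ^ 2 * (m + 1) ^ 2 := by
        rw [← succ_mul_centralBinom_succ]; ring

theorem not_summable_centralBinom_sq_div_sixteen_pow :
    ¬ Summable fun n : ℕ => (centralBinom n : ℝ) ^ 2 / 16 ^ n := by
  intro hs
  refine Real.not_summable_one_div_natCast (.of_nonneg_of_le (fun n => by positivity)
    (fun n => ?_) (hs.mul_left 4))
  rcases Nat.eq_zero_or_pos n with rfl | hn
  · simp
  have hbound : (16 : ℝ) ^ n ≤ 4 * n * (centralBinom n : ℝ) ^ 2 := by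
    exact_mod_cast sixteen_pow_le_four_mul_mul_centralBinom_sq hn
  rw [div_le_iff₀ (by positivity), ← mul_div_assoc, div_mul_eq_mul_div,
    le_div_iff₀ (by positivity)]
  linarith

/-- The number of `2n`-step excursions on the square lattice equals
`C(2n,n)²`, and consequently the return probability equals `1`: the series
`∑ₙ C(2n,n)²/16ⁿ` of return probabilities diverges. -/
theorem square_lattice_excursions_and_recurrence :
    (∀ n : ℕ,
      Fintype.card {w : Fin (2 * n) → sqSteps // (∑ i, (w i : ℤ × ℤ)) = 0} =
        Nat.choose (2 * n) n ^ 2) ∧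
    ¬ Summable (fun n : ℕ => (Nat.choose (2 * n) n : ℝ) ^ 2 / 16 ^ n) :=
  ⟨fun _ => card_sqSteps_walks_sum_eq_zero (Fintype.card_fin _),
    not_summable_centralBinom_sq_div_sixteen_pow⟩
end
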